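/- arXiv:2605.26852 — 2 statements merged into one kernel-verified Lean document; each statement's English description precedes it below -/
import Mathlib

section
/- Let p ≥ 1 be an integer and let N be a p-rooted almost-binary phylogenetic network on X. Then the edge sets of the maximal zig-zag trails of N form a partition of E(N); that is, N is decomposed into the set {Z_1, ..., Z_d} of its maximal zig-zag trails, and this is the unique decomposition of N into maximal zig-zag trails. -/
/-! In a network every vertex has in- and out-degree at most 2, so an edge shares its tail with
at most one other edge and its head with at most one other edge. Write a maximal zig-zag trail as
a list: an edge outside it sharing an endpoint with one of its edges could be attached at an end
of the list if that edge is the first or last one, and is a third partner of an interior edge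
otherwise. So a maximal trail is closed under sharing endpoints, and every trail meeting it
lies inside it. This makes the maximal trail through an edge unique, and finiteness gives one. -/

open Finset

variable {V : Type} [DecidableEq V] [Fintype V]

/-- The vertex set of the digraph given by the edge set `E`. -/
def verts (E : Finset (V × V)) : Finset V :=
  E.image Prod.fst ∪ E.image Prod.snd

/-- In-degree of `v` in the digraph with edge set `E`. -/
def indeg (E : Finset (V × V)) (v : V) : ℕ :=
  (E.filter fun e => e.2 = v).card

/-- Out-degree of `v` in the digraph with edge set `E`. -/
def outdeg (E : Finset (V × V)) (v : V) : ℕ :=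
  (E.filter fun e => e.1 = v).card

/-- `E` is (the edge set of) a `p`-rooted almost-binary phylogenetic network on `X`:
a finite simple DAG with exactly `p` in-degree-0 vertices, each of out-degree 1 or 2 (the roots),
whose set of in-degree-1, out-degree-0 vertices is `X` (the leaves), and all of whose other
vertices have in-degree and out-degree in `{1, 2}`. -/
structure IsPhyloNet (E : Finset (V × V)) (p : ℕ) (X : Finset V) : Prop where
  acyclic : ∀ v : V, ¬ Relation.TransGen (fun a b => (a, b) ∈ E) v v
  roots_card : ((verts E).filter fun v => indeg E v = 0).card = p
  root_outdeg : ∀ v ∈ verts E, indeg E v = 0 → outdeg E v = 1 ∨ outdeg E v = 2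
  leaves_eq : (verts E).filter (fun v => indeg E v = 1 ∧ outdeg E v = 0) = X
  internal_deg : ∀ v ∈ verts E, indeg E v ≠ 0 → v ∉ X →
    (indeg E v = 1 ∨ indeg E v = 2) ∧ (outdeg E v = 1 ∨ outdeg E v = 2)

/-- Two directed edges share a tail or share a head. -/
def Shares (e f : V × V) : Prop := e.1 = f.1 ∨ e.2 = f.2

/-- `S` is (the edge set of) a zig-zag trail of the digraph `E`: a subgraph with `m ≥ 1`
edges which can be ordered so that consecutive edges share a head or share a tail. -/
def IsZigzagTrail (E S : Finset (V × V)) : Prop :=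
  S ⊆ E ∧ ∃ l : List (V × V), l ≠ [] ∧ l.Nodup ∧ l.toFinset = S ∧ l.Chain' Shares

/-- A maximal zig-zag trail: one that is not a proper subgraph of another zig-zag trail. -/
def IsMaximalZigzagTrail (E S : Finset (V × V)) : Prop :=
  IsZigzagTrail E S ∧ ∀ S', IsZigzagTrail E S' → ¬ S ⊂ S'

/-- The `i`-th edge (0-indexed) of a zig-zag sequence on vertices `f 0, f 1, ...`;
when `down = true` the first edge descends (`f 0 > f 1`), and directions alternate. -/
def zigEdge (f : ℕ → V) (down : Bool) (i : ℕ) : V × V :=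
  if decide (i % 2 = 0) = down then (f i, f (i + 1)) else (f (i + 1), f i)

/-- `S` consists of the `m` distinct edges of the zig-zag sequence on `f 0, ..., f m`. -/
def IsZigzagShape (S : Finset (V × V)) (m : ℕ) (f : ℕ → V) (down : Bool) : Prop :=
  S = (Finset.range m).image (zigEdge f down) ∧
  ∀ i < m, ∀ j < m, zigEdge f down i = zigEdge f down j → i = j

/-- A crown: an even number `m` of edges written cyclically as `v₀ > v₁ < ⋯ < v_m = v₀`. -/
def IsCrown (S : Finset (V × V)) : Prop :=
  ∃ m f, 1 ≤ m ∧ m % 2 = 0 ∧ f m = f 0 ∧ IsZigzagShape S m f true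

/-- An M-fence: a non-crown with an even number `m` of edges,
of the form `v₀ < v₁ > ⋯ > v_m ≠ v₀`. -/
def IsMFence (S : Finset (V × V)) : Prop :=
  ¬ IsCrown S ∧ ∃ m f, 1 ≤ m ∧ m % 2 = 0 ∧ f m ≠ f 0 ∧ IsZigzagShape S m f false

/-- A W-fence: a non-crown with an even number `m` of edges,
of the form `v₀ > v₁ < ⋯ < v_m ≠ v₀`. -/
def IsWFence (S : Finset (V × V)) : Prop :=
  ¬ IsCrown S ∧ ∃ m f, 1 ≤ m ∧ m % 2 = 0 ∧ f m ≠ f 0 ∧ IsZigzagShape S m f true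

/-- An N-fence: a non-crown with an odd number `m` of edges,
of the form `v₀ > v₁ < ⋯ > v_m`. -/
def IsNFence (S : Finset (V × V)) : Prop :=
  ¬ IsCrown S ∧ ∃ m f, m % 2 = 1 ∧ IsZigzagShape S m f true

/-- A support network of `N = (V, E)`: a spanning subgraph that is itself a
`p`-rooted almost-binary phylogenetic network on `X` (identified with its edge set). -/
def IsSupportNet (E S : Finset (V × V)) (p : ℕ) (X : Finset V) : Prop :=
  S ⊆ E ∧ verts S = verts E ∧ IsPhyloNet S p X

/-- A minimal support network: no support network is a proper subgraph of it. -/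
def IsMinimalSupportNet (E S : Finset (V × V)) (p : ℕ) (X : Finset V) : Prop :=
  IsSupportNet E S p X ∧ ∀ S', IsSupportNet E S' p X → ¬ S' ⊂ S

/-- A minimum support network: one with the fewest edges among all support networks. -/
def IsMinimumSupportNet (E S : Finset (V × V)) (p : ℕ) (X : Finset V) : Prop :=
  IsSupportNet E S p X ∧ ∀ S', IsSupportNet E S' p X → S.card ≤ S'.card

/-- `S ⊆ Z` is A-admissible (degrees taken in the ambient network `E`):
(C1) `S` contains every edge `(u,v)` of `Z` with `outdeg u = 1` or `indeg v = 1`;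
(C2) of any two distinct edges of `Z` sharing a tail or a head, `S` contains at least one. -/
def AAdmissible (E Z S : Finset (V × V)) : Prop :=
  S ⊆ Z ∧
  (∀ e ∈ Z, (outdeg E e.1 = 1 ∨ indeg E e.2 = 1) → e ∈ S) ∧
  (∀ e₁ ∈ Z, ∀ e₂ ∈ Z, e₁ ≠ e₂ → Shares e₁ e₂ → e₁ ∈ S ∨ e₂ ∈ S)

/-- A B-admissible subset: an A-admissible subset none of whose proper subsets
is A-admissible. -/
def BAdmissible (E Z S : Finset (V × V)) : Prop :=
  AAdmissible E Z S ∧ ∀ S', S' ⊂ S → ¬ AAdmissible E Z S'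

/-- A C-admissible subset: an A-admissible subset of minimum cardinality. -/
def CAdmissible (E Z S : Finset (V × V)) : Prop :=
  AAdmissible E Z S ∧ ∀ S', AAdmissible E Z S' → S.card ≤ S'.card

/-- One subdivision step: an edge `(u, v)` is replaced by `(u, w), (w, v)` for a fresh
vertex `w`. -/
def SubdivStep (T T' : Finset (V × V)) : Prop :=
  ∃ u w v, (u, v) ∈ T ∧ w ∉ verts T ∧
    T' = insert (u, w) (insert (w, v) (T.erase (u, v)))

/-- `S` is a subdivision of `T` (zero or more subdivision steps). -/
def IsSubdivisionOf (S T : Finset (V × V)) : Prop :=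
  Relation.ReflTransGen SubdivStep T S

/-- A rooted binary phylogenetic tree on `X`: a 1-rooted network on `X` in which every
non-root, non-leaf vertex has in-degree 1 and out-degree 2. -/
def IsBinaryPhyloTree (T : Finset (V × V)) (X : Finset V) : Prop :=
  IsPhyloNet T 1 X ∧
  ∀ v ∈ verts T, indeg T v ≠ 0 → v ∉ X → indeg T v = 1 ∧ outdeg T v = 2

/-- `N = (V, E)` is tree-based: it has a support tree, i.e. a spanning subgraph that is a
subdivision of some rooted binary phylogenetic tree on `X`. -/
def IsTreeBased (E : Finset (V × V)) (X : Finset V) : Prop :=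
  ∃ S T, S ⊆ E ∧ verts S = verts E ∧ IsBinaryPhyloTree T X ∧ IsSubdivisionOf S T

/-- The underlying undirected simple graph of the digraph with edge set `S`. -/
def usym (S : Finset (V × V)) : SimpleGraph V where
  Adj u v := u ≠ v ∧ ((u, v) ∈ S ∨ (v, u) ∈ S)
  symm := ⟨fun _ _ h => ⟨h.1.symm, h.2.symm⟩⟩
  loopless := ⟨fun _ h => h.1 rfl⟩

/-- Two edges of `S` lie in a common block of the underlying undirected graph:
they are equal or lie on a common cycle. -/
def SameBlock (S : Finset (V × V)) (e f : V × V) : Prop :=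
  e = f ∨ ∃ (a : V) (w : (usym S).Walk a a), w.IsCycle ∧
    s(e.1, e.2) ∈ w.edges ∧ s(f.1, f.2) ∈ w.edges

/-- The number of reticulations (in-degree-2 vertices) contained in the block of the
edge `e` of `S`. -/
noncomputable def blockReticCount (S : Finset (V × V)) (e : V × V) : ℕ :=
  Set.ncard {v : V | indeg S v = 2 ∧ ∃ f ∈ S, SameBlock S e f ∧ (f.1 = v ∨ f.2 = v)}

/-- The level of the network with edge set `S`: the maximum number of reticulations
contained in a block. -/
noncomputable def level (S : Finset (V × V)) : ℕ :=
  S.sup (blockReticCount S)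

lemma List.IsChain.forall_of_mem_of_iff {β : Type*} {r : β → β → Prop} {p : β → Prop}
    {l : List β} (hc : l.IsChain r) (hr : ∀ x ∈ l, ∀ y ∈ l, r x y → (p x ↔ p y))
    {a : β} (ha : a ∈ l) (hpa : p a) : ∀ b ∈ l, p b := by
  have hne : l ≠ [] := List.ne_nil_of_mem ha
  have hhead := (hc.imp_of_mem_imp fun x y hx hy => hr x hx y hy).induction
    (fun x => p x ↔ p (l.head hne)) l (fun _ _ hxy hx => hxy.symm.trans hx) (fun _ => Iff.rfl)
  exact fun b hb => (hhead b hb).mpr ((hhead a ha).mp hpa)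

lemma Shares.symm {α : Type} {e f : α × α} (h : Shares e f) : Shares f e :=
  h.imp Eq.symm Eq.symm

instance {α : Type} [DecidableEq α] : DecidableRel (Shares (V := α)) :=
  fun _ _ => inferInstanceAs (Decidable (_ ∨ _))

section

variable {α : Type} [DecidableEq α] {E : Finset (α × α)}

lemma indeg_eq_zero_of_notMem_verts {v : α} (hv : v ∉ verts E) : indeg E v = 0 :=
  card_eq_zero.mpr <| filter_eq_empty_iff.mpr fun e he hev =>
    hv <| mem_union_right _ <| mem_image.mpr ⟨e, he, hev⟩

lemma outdeg_eq_zero_of_notMem_verts {v : α} (hv : v ∉ verts E) : outdeg E v = 0 :=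
  card_eq_zero.mpr <| filter_eq_empty_iff.mpr fun e he hev =>
    hv <| mem_union_left _ <| mem_image.mpr ⟨e, he, hev⟩

lemma IsPhyloNet.indeg_le_two_and_outdeg_le_two {p : ℕ} {X : Finset α} (hN : IsPhyloNet E p X)
    (v : α) : indeg E v ≤ 2 ∧ outdeg E v ≤ 2 := by
  by_cases hv : v ∈ verts E
  swap
  · simp [indeg_eq_zero_of_notMem_verts hv, outdeg_eq_zero_of_notMem_verts hv]
  by_cases hroot : indeg E v = 0
  · have := hN.root_outdeg v hv hroot
    omega
  by_cases hleaf : v ∈ X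
  · rw [← hN.leaves_eq] at hleaf
    have := (mem_filter.mp hleaf).2
    omega
  · have := hN.internal_deg v hv hroot hleaf
    omega

lemma card_filter_shares_erase_le_two (hin : ∀ v, indeg E v ≤ 2) (hout : ∀ v, outdeg E v ≤ 2)
    {f : α × α} (hf : f ∈ E) : ((E.filter (Shares f)).erase f).card ≤ 2 := by
  have hsub : (E.filter (Shares f)).erase f ⊆
      (E.filter fun g => g.1 = f.1).erase f ∪ (E.filter fun g => g.2 = f.2).erase f := by
    intro g hg
    simp only [Shares, mem_erase, mem_filter, mem_union] at hg ⊢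
    grind
  have hTail : ((E.filter fun g => g.1 = f.1).erase f).card ≤ 1 := by
    have := hout f.1
    rw [card_erase_of_mem (by simp [hf])]
    unfold outdeg at this
    omega
  have hHead : ((E.filter fun g => g.2 = f.2).erase f).card ≤ 1 := by
    have := hin f.2
    rw [card_erase_of_mem (by simp [hf])]
    unfold indeg at this
    omega
  calc _ ≤ _ := card_le_card hsub
    _ ≤ _ := card_union_le _ _
    _ ≤ 2 := by omega

lemma isZigzagTrail_insert {S : Finset (α × α)} {l : List (α × α)} {g : α × α} (hSE : S ⊆ E)
    (hnd : l.Nodup) (hlS : l.toFinset = S) (hc : l.IsChain Shares) (hg : g ∈ E) (hgS : g ∉ S)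
    (hshares : ∀ a ∈ l.head?, Shares g a) : IsZigzagTrail E (insert g S) :=
  ⟨insert_subset hg hSE, g :: l, List.cons_ne_nil _ _,
    List.nodup_cons.mpr ⟨fun h => hgS (hlS ▸ List.mem_toFinset.mpr h), hnd⟩,
    by rw [List.toFinset_cons, hlS], List.isChain_cons.mpr ⟨hshares, hc⟩⟩

lemma IsMaximalZigzagTrail.mem_of_shares (hin : ∀ v, indeg E v ≤ 2)
    (hout : ∀ v, outdeg E v ≤ 2) {S : Finset (α × α)} (hS : IsMaximalZigzagTrail E S)
    {f g : α × α} (hf : f ∈ S) (hg : g ∈ E) (hfg : Shares f g) : g ∈ S := by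
  by_contra hgS
  obtain ⟨hSE, l, -, hnd, hlS, hc⟩ := hS.1
  have hno_extension : ∀ l' : List (α × α), l'.Nodup → l'.toFinset = S → l'.IsChain Shares →
      l'.head? ≠ some f := fun l' hnd' hlS' hc' hhead =>
    hS.2 _ (isZigzagTrail_insert hSE hnd' hlS' hc' hg hgS (by simpa [hhead] using hfg.symm))
      (ssubset_insert hgS)
  obtain ⟨i, hi, rfl⟩ := List.mem_iff_getElem.mp (List.mem_toFinset.mp (hlS ▸ hf))
  rcases i with _ | j
  · exact hno_extension l hnd hlS hc (by rw [List.head?_eq_getElem?, List.getElem?_eq_getElem])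
  rcases (Nat.succ_le_of_lt hi).eq_or_lt with hlast | hmid
  · refine hno_extension l.reverse (List.nodup_reverse.mpr hnd) (by rw [List.toFinset_reverse, hlS])
      (List.isChain_reverse.mpr (hc.imp fun _ _ => Shares.symm)) ?_
    simp [List.head?_reverse, List.getLast?_eq_getElem?, ← hlast]
  have hmemS : ∀ k (hk : k < l.length), l[k] ∈ S :=
    fun k hk => hlS ▸ List.mem_toFinset.mpr (List.getElem_mem hk)
  have hne_g : ∀ k (hk : k < l.length), l[k] ≠ g := fun k hk h => hgS (h ▸ hmemS k hk)
  have hinj : ∀ a b (ha : a < l.length) (hb : b < l.length), a ≠ b → l[a] ≠ l[b] :=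
    fun a b ha hb hab h => hab (hnd.getElem_inj_iff.mp h)
  -- `l[j + 1]` already shares an endpoint with its two neighbours in `l`; `g` would be a third
  have hsub : {l[j], l[j + 2], g} ⊆ (E.filter (Shares l[j + 1])).erase l[j + 1] := by
    simp only [insert_subset_iff, singleton_subset_iff, mem_erase, mem_filter]
    exact ⟨⟨hinj _ _ _ _ (by omega), hSE (hmemS _ _), (hc.getElem j (by omega)).symm⟩,
      ⟨hinj _ _ _ _ (by omega), hSE (hmemS _ _), hc.getElem (j + 1) hmid⟩,
      ⟨(hne_g _ _).symm, hg, hfg⟩⟩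
  have hthree : ({l[j], l[j + 2], g} : Finset (α × α)).card = 3 :=
    card_eq_three.mpr ⟨_, _, _, hinj _ _ _ _ (by omega), hne_g _ _, hne_g _ _, rfl⟩
  have := card_le_card hsub
  have := card_filter_shares_erase_le_two hin hout (hSE hf)
  omega

lemma IsMaximalZigzagTrail.subset_of_mem (hin : ∀ v, indeg E v ≤ 2)
    (hout : ∀ v, outdeg E v ≤ 2) {S T : Finset (α × α)} (hS : IsMaximalZigzagTrail E S)
    (hT : IsZigzagTrail E T) {e : α × α} (heS : e ∈ S) (heT : e ∈ T) : T ⊆ S := by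
  obtain ⟨hTE, l, -, -, rfl, hc⟩ := hT
  have hE : ∀ x ∈ l, x ∈ E := fun x hx => hTE (List.mem_toFinset.mpr hx)
  have hclosed : ∀ x ∈ l, ∀ y ∈ l, Shares x y → (x ∈ S ↔ y ∈ S) := fun x hx y hy hxy =>
    ⟨fun h => hS.mem_of_shares hin hout h (hE y hy) hxy,
      fun h => hS.mem_of_shares hin hout h (hE x hx) hxy.symm⟩
  exact fun x hx => hc.forall_of_mem_of_iff hclosed (List.mem_toFinset.mp heT) heS x
    (List.mem_toFinset.mp hx)

theorem existsUnique_isMaximalZigzagTrail_mem (hin : ∀ v, indeg E v ≤ 2)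
    (hout : ∀ v, outdeg E v ≤ 2) {e : α × α} (he : e ∈ E) :
    ∃! S, IsMaximalZigzagTrail E S ∧ e ∈ S := by
  have hsingleton : IsZigzagTrail E {e} :=
    ⟨singleton_subset_iff.mpr he, [e], List.cons_ne_nil _ _, List.nodup_singleton e, rfl,
      List.isChain_singleton e⟩
  have hfinite : {S | IsZigzagTrail E S}.Finite :=
    (E.powerset : Set (Finset (α × α))).toFinite.subset fun S hS => mem_powerset.mpr hS.1
  obtain ⟨S, heS, hmax⟩ := hfinite.exists_le_maximal hsingleton
  have hS : IsMaximalZigzagTrail E S := ⟨hmax.1, fun T hT hST => hST.2 (hmax.2 hT hST.1)⟩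
  refine ⟨S, ⟨hS, singleton_subset_iff.mp heS⟩, fun T ⟨hT, heT⟩ => ?_⟩
  have hTS := hS.subset_of_mem hin hout hT.1 (singleton_subset_iff.mp heS) heT
  exact hTS.eq_or_ssubset.resolve_right (hT.2 S hS.1)

lemma IsZigzagTrail.nonempty {S : Finset (α × α)} (hS : IsZigzagTrail E S) : S.Nonempty := by
  obtain ⟨-, l, hl, -, rfl, -⟩ := hS
  exact List.toFinset_nonempty_iff l |>.mpr hl

end

theorem stmt0_general (p : ℕ) (X : Finset V)
    (E : Finset (V × V)) (hN : IsPhyloNet E p X) :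
    (∀ e ∈ E, ∃! S : Finset (V × V), IsMaximalZigzagTrail E S ∧ e ∈ S) ∧
    (∀ P : Set (Finset (V × V)),
      (∀ S ∈ P, IsMaximalZigzagTrail E S) →
      P.PairwiseDisjoint id →
      (⋃ S ∈ P, (S : Set (V × V))) = (E : Set (V × V)) →
      P = {S | IsMaximalZigzagTrail E S}) := by
  have hdeg := hN.indeg_le_two_and_outdeg_le_two
  have hunique : ∀ e ∈ E, ∃! S, IsMaximalZigzagTrail E S ∧ e ∈ S := fun e he =>
    existsUnique_isMaximalZigzagTrail_mem (fun v => (hdeg v).1) (fun v => (hdeg v).2) he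
  refine ⟨hunique, fun P hP _ hcover => ?_⟩
  ext S
  refine ⟨hP S, fun hS => ?_⟩
  obtain ⟨e, heS⟩ := hS.1.nonempty
  have heE : e ∈ E := hS.1.1 heS
  have heCover : e ∈ ⋃ S ∈ P, (S : Set (V × V)) := hcover ▸ mem_coe.mpr heE
  obtain ⟨T, hTP, heT⟩ : ∃ T ∈ P, e ∈ T := by simpa using heCover
  rwa [(hunique e heE).unique ⟨hS, heS⟩ ⟨hP T hTP, heT⟩]

/-- The maximal zig-zag trails of a `p`-rooted almost-binary phylogenetic network partition
its edge set, and this is the unique decomposition into maximal zig-zag trails. -/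
theorem stmt0 (p : ℕ) (hp : 1 ≤ p) (X : Finset V) (hX : X.Nonempty)
    (E : Finset (V × V)) (hN : IsPhyloNet E p X) :
    (∀ e ∈ E, ∃! S : Finset (V × V), IsMaximalZigzagTrail E S ∧ e ∈ S) ∧
    (∀ P : Set (Finset (V × V)),
      (∀ S ∈ P, IsMaximalZigzagTrail E S) →
      P.PairwiseDisjoint id →
      (⋃ S ∈ P, (S : Set (V × V))) = (E : Set (V × V)) →
      P = {S | IsMaximalZigzagTrail E S}) :=
  stmt0_general p X E hN
end

section
/- Let p ≥ 1 be an integer and let N be a p-rooted almost-binary phylogenetic network on X. Then the map S ↦ N[S] (the subgraph of N induced by the edge set S) is a bijection from the family of A-admissible subsets of E(N) onto the family A_N of all support networks of N; in particular, for S ⊆ E(N), the induced subgraph N[S] is a support network of N if and only if S is an A-admissible subset of E(N). -/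
open Finset

variable {V : Type} [DecidableEq V] [Fintype V]

/-! A spanning subgraph `S` of `N` is a support network exactly when no vertex of `N` loses all of
its in-edges or all of its out-edges. Necessity: `S` has as many roots as `N` and every root of `N`
is a root of `S`, so no other vertex loses its in-edges; a vertex of `S` without out-edges is a
leaf of `S`, hence of `N`. Sufficiency: the in- and out-degrees of `S` are then zero exactly where
those of `N` are, so roots, leaves and the degree bounds carry over. Since all in- and out-degrees
of `N` are at most 2, keeping an edge of every nonempty in- and out-star is precisely what (C1)
and (C2) demand. -/

theorem Finset.inter_nonempty_iff_of_card_le_two {α : Type*} [DecidableEq α] {F S : Finset α}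
    (hF : F.Nonempty) (h2 : #F ≤ 2) :
    (F ∩ S).Nonempty ↔ (#F = 1 → F ⊆ S) ∧ ∀ a ∈ F, ∀ b ∈ F, a ≠ b → a ∈ S ∨ b ∈ S := by
  obtain h1 | h2 : #F = 1 ∨ #F = 2 := by have := hF.card_pos; omega
  · obtain ⟨a, rfl⟩ := card_eq_one.mp h1
    simp [Finset.Nonempty]
  · obtain ⟨a, b, hab, rfl⟩ := card_eq_two.mp h2
    simp only [Finset.Nonempty, mem_inter, mem_insert, mem_singleton, card_pair hab]
    grind

section

omit [Fintype V]

theorem mem_verts_iff {E : Finset (V × V)} {v : V} :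
    v ∈ verts E ↔ indeg E v ≠ 0 ∨ outdeg E v ≠ 0 := by
  simp only [verts, indeg, outdeg, mem_union, mem_image, ne_eq, card_eq_zero,
    filter_eq_empty_iff, not_forall, not_not, exists_prop]
  exact or_comm

theorem indeg_mono {S E : Finset (V × V)} (h : S ⊆ E) (v : V) : indeg S v ≤ indeg E v :=
  card_le_card (filter_subset_filter _ h)

theorem outdeg_mono {S E : Finset (V × V)} (h : S ⊆ E) (v : V) : outdeg S v ≤ outdeg E v :=
  card_le_card (filter_subset_filter _ h)

theorem card_filter_ne_zero_iff_of_subset {α β : Type*} [DecidableEq α] [DecidableEq β]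
    (g : α → β) {E S : Finset α} (hS : S ⊆ E) {b : β} (hne : #(E.filter (g · = b)) ≠ 0)
    (h2 : #(E.filter (g · = b)) ≤ 2) :
    #(S.filter (g · = b)) ≠ 0 ↔ (#(E.filter (g · = b)) = 1 → ∀ e ∈ E, g e = b → e ∈ S) ∧
      ∀ e₁ ∈ E, g e₁ = b → ∀ e₂ ∈ E, g e₂ = b → e₁ ≠ e₂ → e₁ ∈ S ∨ e₂ ∈ S := by
  have hSb : S.filter (g · = b) = E.filter (g · = b) ∩ S := by
    rw [filter_inter, inter_eq_right.mpr hS]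
  rw [card_ne_zero, hSb, inter_nonempty_iff_of_card_le_two (card_ne_zero.mp hne) h2]
  simp only [subset_iff, mem_filter, and_imp]

def KeepsDegreesPositive (E S : Finset (V × V)) : Prop :=
  ∀ v, (indeg E v ≠ 0 → indeg S v ≠ 0) ∧ (outdeg E v ≠ 0 → outdeg S v ≠ 0)

theorem aAdmissible_iff {E S : Finset (V × V)} (hdeg : ∀ v, indeg E v ≤ 2 ∧ outdeg E v ≤ 2) :
    AAdmissible E E S ↔ S ⊆ E ∧ KeepsDegreesPositive E S := by
  have hin (hS : S ⊆ E) {v} (h : indeg E v ≠ 0) :=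
    card_filter_ne_zero_iff_of_subset Prod.snd hS h (hdeg v).1
  have hout (hS : S ⊆ E) {v} (h : outdeg E v ≠ 0) :=
    card_filter_ne_zero_iff_of_subset Prod.fst hS h (hdeg v).2
  constructor
  · rintro ⟨hS, hC1, hC2⟩
    refine ⟨hS, fun v => ⟨fun h => (hin hS h).mpr ⟨?_, ?_⟩, fun h => (hout hS h).mpr ⟨?_, ?_⟩⟩⟩
    · exact fun h1 e he hev => hC1 e he (Or.inr (hev ▸ h1))
    · exact fun e₁ h₁ hv₁ e₂ h₂ hv₂ hne => hC2 e₁ h₁ e₂ h₂ hne (Or.inr (hv₁.trans hv₂.symm))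
    · exact fun h1 e he hev => hC1 e he (Or.inl (hev ▸ h1))
    · exact fun e₁ h₁ hv₁ e₂ h₂ hv₂ hne => hC2 e₁ h₁ e₂ h₂ hne (Or.inl (hv₁.trans hv₂.symm))
  · rintro ⟨hS, hkeep⟩
    have hin_ne {e} (he : e ∈ E) : indeg E e.2 ≠ 0 := card_ne_zero_of_mem (mem_filter.mpr ⟨he, rfl⟩)
    have hout_ne {e} (he : e ∈ E) : outdeg E e.1 ≠ 0 :=
      card_ne_zero_of_mem (mem_filter.mpr ⟨he, rfl⟩)
    refine ⟨hS, ?_, ?_⟩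
    · rintro e he (h1 | h1)
      · exact ((hout hS (hout_ne he)).mp ((hkeep e.1).2 (hout_ne he))).1 h1 e he rfl
      · exact ((hin hS (hin_ne he)).mp ((hkeep e.2).1 (hin_ne he))).1 h1 e he rfl
    · rintro e₁ h₁ e₂ h₂ hne (h | h)
      · exact ((hout hS (hout_ne h₁)).mp ((hkeep _).2 (hout_ne h₁))).2 e₁ h₁ rfl e₂ h₂ h.symm hne
      · exact ((hin hS (hin_ne h₁)).mp ((hkeep _).1 (hin_ne h₁))).2 e₁ h₁ rfl e₂ h₂ h.symm hne

variable {p : ℕ} {X : Finset V} {E S : Finset (V × V)}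

theorem IsPhyloNet.mem_leaves (hN : IsPhyloNet E p X) {v : V} (hv : v ∈ X) :
    v ∈ verts E ∧ indeg E v = 1 ∧ outdeg E v = 0 :=
  mem_filter.mp (hN.leaves_eq ▸ hv)

theorem IsPhyloNet.outdeg_ne_zero (hN : IsPhyloNet E p X) {v : V} (hv : v ∈ verts E)
    (hx : v ∉ X) : outdeg E v ≠ 0 := by
  by_cases h0 : indeg E v = 0
  · have := hN.root_outdeg v hv h0; omega
  · have := (hN.internal_deg v hv h0 hx).2; omega

theorem IsPhyloNet.deg_le_two (hN : IsPhyloNet E p X) (v : V) :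
    indeg E v ≤ 2 ∧ outdeg E v ≤ 2 := by
  by_cases hv : v ∈ verts E
  · by_cases h0 : indeg E v = 0
    · have := hN.root_outdeg v hv h0; omega
    · by_cases hx : v ∈ X
      · have := hN.mem_leaves hx; omega
      · have := hN.internal_deg v hv h0 hx; omega
  · rw [mem_verts_iff] at hv; omega

theorem IsSupportNet.keepsDegreesPositive (hN : IsPhyloNet E p X)
    (hS : IsSupportNet E S p X) : KeepsDegreesPositive E S := by
  obtain ⟨hSE, hverts, hSN⟩ := hS
  have hroots : (verts E).filter (fun v => indeg E v = 0)
      = (verts E).filter (fun v => indeg S v = 0) :=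
    eq_of_subset_of_card_le (monotone_filter_right _ fun v h => by have := indeg_mono hSE v; omega)
      (by rw [hN.roots_card, ← hSN.roots_card, hverts])
  refine fun v => ⟨fun hE hS0 => ?_, fun hE hS0 => ?_⟩
  · have hv : v ∈ (verts E).filter (fun v => indeg S v = 0) :=
      mem_filter.mpr ⟨mem_verts_iff.mpr (Or.inl hE), hS0⟩
    rw [← hroots] at hv
    exact hE (mem_filter.mp hv).2
  · have hv : v ∈ verts S := hverts ▸ mem_verts_iff.mpr (Or.inr hE)
    by_cases hx : v ∈ X
    · exact hE (hN.mem_leaves hx).2.2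
    · exact hSN.outdeg_ne_zero hv hx hS0

theorem isSupportNet_of_keepsDegreesPositive (hN : IsPhyloNet E p X) (hSE : S ⊆ E)
    (hkeep : KeepsDegreesPositive E S) : IsSupportNet E S p X := by
  have hin (v : V) : indeg S v = 0 ↔ indeg E v = 0 := by
    have := indeg_mono hSE v; have := (hkeep v).1; omega
  have hout (v : V) : outdeg S v = 0 ↔ outdeg E v = 0 := by
    have := outdeg_mono hSE v; have := (hkeep v).2; omega
  have hverts : verts S = verts E := by
    ext v
    simp only [mem_verts_iff, ne_eq, hin, hout]
  refine ⟨hSE, hverts, fun v h => hN.acyclic v ?_, ?_, ?_, ?_, ?_⟩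
  · exact Relation.TransGen.mono (fun _ _ hab => hSE hab) v v h
  · rw [hverts, filter_congr fun v _ => hin v, hN.roots_card]
  · intro v hv h0
    have := hN.root_outdeg v (hverts ▸ hv) ((hin v).mp h0)
    have := outdeg_mono hSE v; have := hout v; omega
  · rw [hverts, ← hN.leaves_eq]
    refine filter_congr fun v hv => ?_
    have hleaf : outdeg E v = 0 → indeg E v = 1 := fun h0 =>
      (hN.mem_leaves (by_contra fun hx => hN.outdeg_ne_zero hv hx h0)).2.1
    have := indeg_mono hSE v; have := hin v; have := hout v; omega
  · intro v hv h0 hx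
    have := hN.internal_deg v (hverts ▸ hv) ((hin v).not.mp h0) hx
    have := indeg_mono hSE v; have := outdeg_mono hSE v; have := hout v; omega

theorem isSupportNet_iff_aAdmissible (hN : IsPhyloNet E p X) :
    IsSupportNet E S p X ↔ AAdmissible E E S := by
  rw [aAdmissible_iff hN.deg_le_two]
  exact ⟨fun hS => ⟨hS.1, hS.keepsDegreesPositive hN⟩,
    fun ⟨hSE, hkeep⟩ => isSupportNet_of_keepsDegreesPositive hN hSE hkeep⟩

end

theorem stmt5_general (p : ℕ) (X : Finset V) (E : Finset (V × V)) (hN : IsPhyloNet E p X) :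
    Set.BijOn (fun S : Finset (V × V) => S)
      {S | AAdmissible E E S} {S | IsSupportNet E S p X} ∧
    ∀ S ⊆ E, (IsSupportNet E S p X ↔ AAdmissible E E S) := by
  have hfamilies : {S | AAdmissible E E S} = {S | IsSupportNet E S p X} :=
    Set.ext fun _ => (isSupportNet_iff_aAdmissible hN).symm
  exact ⟨hfamilies ▸ Set.bijOn_id _, fun _ _ => isSupportNet_iff_aAdmissible hN⟩

/-- The map `S ↦ N[S]` is a bijection from the A-admissible subsets of `E(N)` onto the
family of all support networks of `N` (identified with their edge sets); in particular,
`N[S]` is a support network of `N` iff `S` is an A-admissible subset of `E(N)`. -/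
theorem stmt5 (p : ℕ) (hp : 1 ≤ p) (X : Finset V) (hX : X.Nonempty)
    (E : Finset (V × V)) (hN : IsPhyloNet E p X) :
    Set.BijOn (fun S : Finset (V × V) => S)
      {S | AAdmissible E E S} {S | IsSupportNet E S p X} ∧
    ∀ S ⊆ E, (IsSupportNet E S p X ↔ AAdmissible E E S) :=
  stmt5_general p X E hN
end
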